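/- arXiv:2209.05992 — 5 statements merged into one kernel-verified Lean document; each statement's English description precedes it below -/
import Mathlib

section
/- Let G be a graph and c₁ a proper k-coloring of G that has a color class containing at most one vertex. Then for any proper k-coloring c of G, there exists a proper k-coloring c₂ of G that shares a color class with c (i.e., some color class of c₂ equals some color class of c as a set of vertices) such that c₂ is obtained from c₁ by a sequence of single-vertex recolorings, each vertex being recolored at most once, with every intermediate coloring proper. -/
/-- A proper coloring: adjacent vertices get different colors. -/
def Proper {V α : Type} (G : SimpleGraph V) (c : V → α) : Prop :=
  ∀ ⦃a b⦄, G.Adj a b → c a ≠ c b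

/-- Number of steps of the sequence `σ` (of length `n`) at which the vertex `u`
is recolored. -/
noncomputable def recolorCount {V α : Type} (σ : ℕ → V → α) (n : ℕ) (u : V) : ℕ :=
  ({i | i < n ∧ σ i u ≠ σ (i + 1) u}).ncard

/-- A recoloring sequence from `c₁` to `c₂` with `n` single-vertex recoloring steps,
every intermediate coloring being a proper coloring of `G`. -/
def RecolorSeqP {V α : Type} (G : SimpleGraph V) (c₁ c₂ : V → α) (n : ℕ)
    (σ : ℕ → V → α) : Prop :=
  σ 0 = c₁ ∧ σ n = c₂ ∧ (∀ i ≤ n, Proper G (σ i)) ∧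
  ∀ i < n, ∃ v, σ i v ≠ σ (i + 1) v ∧ ∀ u, u ≠ v → σ i u = σ (i + 1) u

/-!
Choose `j` so that the class `c⁻¹(j)` contains the small class of color `i` of `c₁`, and
recolor the vertices of `c⁻¹(j)` to `i` one at a time. Every intermediate coloring agrees with
`c₁` outside a subset of `c⁻¹(j)` and gives that subset the color `i`. It is proper because
`c⁻¹(j)` is independent and contains every vertex that `c₁` colors `i`. At the end, the class
of `i` is exactly `c⁻¹(j)`.
-/

theorem Proper.isIndepSet_fiber {V α : Type} {G : SimpleGraph V} {c : V → α} (hc : Proper G c)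
    (a : α) : G.IsIndepSet {v | c v = a} :=
  fun _ hu _ hv _ huv => hc huv (hu.trans hv.symm)

theorem Proper.ite_of_isIndepSet {V α : Type} {G : SimpleGraph V} {c : V → α}
    (hc : Proper G c) {p : V → Prop} [DecidablePred p] {a : α}
    (hp : G.IsIndepSet {v | p v ∨ c v = a}) :
    Proper G (fun v => if p v then a else c v) := by
  intro u v huv heq
  have hne := G.ne_of_adj huv
  by_cases hu : p u <;> by_cases hv : p v <;> simp only [hu, hv, if_true, if_false] at heq
  · exact hp (Or.inl hu) (Or.inl hv) hne huv
  · exact hp (Or.inl hu) (Or.inr heq.symm) hne huv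
  · exact hp (Or.inr heq) (Or.inl hv) hne huv
  · exact hc huv heq

theorem recolorCount_le_one_iff {V α : Type} {σ : ℕ → V → α} {n : ℕ} {u : V} :
    recolorCount σ n u ≤ 1 ↔
      ∀ i < n, ∀ j < n, σ i u ≠ σ (i + 1) u → σ j u ≠ σ (j + 1) u → i = j := by
  rw [recolorCount, Set.ncard_le_one ((Set.finite_lt_nat n).subset fun _ hi => hi.1)]
  exact ⟨fun h i hi j hj hci hcj => h i ⟨hi, hci⟩ j ⟨hj, hcj⟩,
    fun h i hi j hj => h i hi.1 j hj.1 hi.2 hj.2⟩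

section recolorPrefix

variable {V α : Type} [DecidableEq V] (c : V → α) (a : α) (L : List V)

def recolorPrefix (m : ℕ) : V → α :=
  fun v => if v ∈ L.take m then a else c v

theorem recolorPrefix_zero : recolorPrefix c a L 0 = c := by
  funext v
  simp [recolorPrefix]

theorem recolorPrefix_length :
    recolorPrefix c a L L.length = fun v => if v ∈ L then a else c v := by
  funext v
  simp [recolorPrefix]

theorem recolorPrefix_succ {m : ℕ} (hm : m < L.length) :
    recolorPrefix c a L (m + 1) = Function.update (recolorPrefix c a L m) L[m] a := by
  funext v
  have hmem : v ∈ L.take (m + 1) ↔ v ∈ L.take m ∨ v = L[m] := by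
    rw [List.take_add_one, List.mem_append, List.getElem?_eq_getElem hm]
    simp
  by_cases hv : v = L[m]
  · subst hv
    simp [recolorPrefix, hmem]
  · simp [recolorPrefix, hmem, hv]

variable {c a L}

theorem recolorPrefix_getElem_self (hL : L.Nodup) {m : ℕ} (hm : m < L.length) :
    recolorPrefix c a L m L[m] = c L[m] := by
  have hnot : L[m] ∉ L.take m := by
    rw [List.mem_take_iff_getElem]
    rintro ⟨j, hj, hjm⟩
    have := (hL.getElem_inj_iff).mp hjm
    omega
  simp [recolorPrefix, hnot]

theorem eq_getElem_of_recolorPrefix_ne {m : ℕ} (hm : m < L.length) {v : V}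
    (hv : recolorPrefix c a L m v ≠ recolorPrefix c a L (m + 1) v) : v = L[m] := by
  by_contra hne
  rw [recolorPrefix_succ c a L hm, Function.update_of_ne hne] at hv
  exact hv rfl

theorem recolorSeqP_recolorPrefix {G : SimpleGraph V} (hc : Proper G c) (hL : L.Nodup)
    (hLa : ∀ v ∈ L, c v ≠ a) (hind : G.IsIndepSet {v | v ∈ L ∨ c v = a}) :
    RecolorSeqP G c (fun v => if v ∈ L then a else c v) L.length (recolorPrefix c a L) := by
  refine ⟨recolorPrefix_zero c a L, recolorPrefix_length c a L, fun m _ => ?_, fun m hm => ?_⟩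
  · exact hc.ite_of_isIndepSet (hind.mono fun v hv => hv.imp_left List.mem_of_mem_take)
  · refine ⟨L[m], ?_, fun v hv => by_contra fun h => hv (eq_getElem_of_recolorPrefix_ne hm h)⟩
    rw [recolorPrefix_getElem_self hL hm, recolorPrefix_succ c a L hm, Function.update_self]
    exact hLa _ (List.getElem_mem hm)

theorem recolorCount_recolorPrefix_le_one (hL : L.Nodup) (v : V) :
    recolorCount (recolorPrefix c a L) L.length v ≤ 1 :=
  recolorCount_le_one_iff.mpr fun _ hi _ hj hvi hvj =>
    (hL.getElem_inj_iff).mp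
      ((eq_getElem_of_recolorPrefix_ne hi hvi).symm.trans
        (eq_getElem_of_recolorPrefix_ne hj hvj))

end recolorPrefix

theorem exists_recolorSeqP_recolor_finset {V α : Type} [DecidableEq V] {G : SimpleGraph V}
    {c : V → α} (hc : Proper G c) {a : α} {S : Finset V}
    (hS : G.IsIndepSet (↑S ∪ {v | c v = a})) :
    ∃ (n : ℕ) (σ : ℕ → V → α),
      RecolorSeqP G c (fun v => if v ∈ S then a else c v) n σ ∧
        ∀ v, recolorCount σ n v ≤ 1 := by
  classical
  set L := (S.filter (c · ≠ a)).toList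
  have hmem : ∀ v, v ∈ L ↔ v ∈ S ∧ c v ≠ a := by simp [L]
  have hfinal : (fun v => if v ∈ L then a else c v) = fun v => if v ∈ S then a else c v := by
    funext v
    by_cases hv : v ∈ S <;> by_cases hva : c v = a <;> simp [hmem, hv, hva]
  refine ⟨L.length, recolorPrefix c a L, hfinal ▸ recolorSeqP_recolorPrefix hc
    (Finset.nodup_toList _) (fun v hv => ((hmem v).mp hv).2) (hS.mono ?_),
    recolorCount_recolorPrefix_le_one (Finset.nodup_toList _)⟩
  rintro v (hv | hv)
  exacts [Or.inl ((hmem v).mp hv).1, Or.inr hv]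

/-- if a proper `k`-coloring `c₁` has a color class with at most one vertex,
then for any proper `k`-coloring `c` there is a proper `k`-coloring `c₂` sharing a color
class with `c` which is reachable from `c₁` by single-vertex recolorings, each vertex
being recolored at most once. -/
theorem reach_coloring_sharing_class {V : Type} [Fintype V] (G : SimpleGraph V) (k : ℕ)
    (c₁ : V → Fin k) (h₁ : Proper G c₁) (hsmall : ∃ i, ({v | c₁ v = i}).ncard ≤ 1)
    (c : V → Fin k) (hc : Proper G c) :
    ∃ (c₂ : V → Fin k) (n : ℕ) (σ : ℕ → V → Fin k),
      Proper G c₂ ∧ (∃ i j : Fin k, {v | c₂ v = i} = {v | c v = j}) ∧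
      RecolorSeqP G c₁ c₂ n σ ∧ ∀ v, recolorCount σ n v ≤ 1 := by
  classical
  obtain ⟨i, hi⟩ := hsmall
  obtain ⟨j, hij⟩ : ∃ j, {v | c₁ v = i} ⊆ {v | c v = j} := by
    rcases (Set.ncard_le_one_iff_subsingleton.mp hi).eq_empty_or_singleton with h | ⟨v, h⟩
    · exact ⟨i, h ▸ Set.empty_subset _⟩
    · exact ⟨c v, h ▸ Set.singleton_subset_iff.mpr rfl⟩
  set S := Finset.univ.filter (c · = j)
  have hS : (↑S ∪ {v | c₁ v = i} : Set V) = {v | c v = j} := by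
    simpa [S] using hij
  obtain ⟨n, σ, hσ, hcount⟩ :=
    exists_recolorSeqP_recolor_finset h₁ (hS ▸ hc.isIndepSet_fiber j)
  refine ⟨_, n, σ, hσ.2.1 ▸ hσ.2.2.1 n le_rfl, ⟨i, j, ?_⟩, hσ, hcount⟩
  rw [← hS]
  ext v
  by_cases hv : v ∈ S <;> simp [hv]
end

section
/- Let L be a list assignment of a graph G*, let α and β be two L-colorings of G*, let v be a vertex of G* with |L(v)| ≥ d(v) + 2 where d(v) is the degree of v in G*, and let G** = G* − v. Suppose σ is a recoloring sequence from α restricted to G** to β restricted to G**, and the neighbors of v are recolored a total of t times in σ. Then σ can be extended to a recoloring sequence from α to β in G* that recolors v at most ⌈t / (|L(v)| − d(v) − 1)⌉ + 1 times. -/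
/-- The graph `G − w` (on the same vertex set, with `w` isolated). -/
def deleteVert {V : Type} (G : SimpleGraph V) (w : V) : SimpleGraph V where
  Adj a b := G.Adj a b ∧ a ≠ w ∧ b ≠ w
  symm := by
    constructor
    rintro a b ⟨h, ha, hb⟩
    exact ⟨h.symm, hb, ha⟩
  loopless := by
    constructor
    rintro a ⟨h, -, -⟩
    exact G.loopless.irrefl a h


/-!
The vertex `v` keeps its color until a neighbor is about to take it, and then switches to a color
that no neighbor takes during the next `r + 1 = |L(v)| - d(v) - 1` recolorings of neighbors. Such a
color exists: while the neighbors are recolored `s` times in total, at most `d(v) + s` colors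
appear on them, and `|L(v)| = d(v) + r + 2`. Consecutive forced switches of `v` are therefore at
least `r + 1` neighbor recolorings apart, so there are at most `⌈t / (r + 1)⌉` of them, and one
last recoloring moves `v` to `β(v)`.
-/

open Finset Function

namespace ExtensionLemma

section RecolorCount

variable {V α : Type}

lemma recolorCount_eq_card_filter [DecidableEq α] (σ : ℕ → V → α) (n : ℕ) (u : V) :
    recolorCount σ n u = #{i ∈ range n | σ i u ≠ σ (i + 1) u} := by
  rw [recolorCount, ← Set.ncard_coe_finset]
  congr
  ext i
  simp

@[simp]
lemma recolorCount_zero (σ : ℕ → V → α) (u : V) : recolorCount σ 0 u = 0 := by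
  simp [recolorCount]

lemma recolorCount_succ [DecidableEq α] (σ : ℕ → V → α) (n : ℕ) (u : V) :
    recolorCount σ (n + 1) u = recolorCount σ n u + if σ n u = σ (n + 1) u then 0 else 1 := by
  rw [recolorCount_eq_card_filter, recolorCount_eq_card_filter, range_add_one, filter_insert]
  by_cases h : σ n u = σ (n + 1) u
  · simp [h]
  · rw [if_pos h, card_insert_of_notMem (by simp), if_neg h]

lemma recolorCount_mono (σ : ℕ → V → α) (u : V) : Monotone (recolorCount σ · u) := by
  classical
  exact monotone_nat_of_le_succ fun n => by rw [recolorCount_succ]; omega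

lemma recolorCount_congr {σ τ : ℕ → V → α} {n : ℕ} {u : V} (h : ∀ i ≤ n, σ i u = τ i u) :
    recolorCount σ n u = recolorCount τ n u := by
  unfold recolorCount
  congr 1
  exact Set.ext fun i => and_congr_right fun hi => by rw [h i hi.le, h (i + 1) hi]

lemma eq_of_recolorCount_eq {σ : ℕ → V → α} {u : V} {a b : ℕ} (hab : a ≤ b)
    (h : recolorCount σ b u = recolorCount σ a u) : σ b u = σ a u := by
  classical
  induction b, hab using Nat.le_induction with
  | base => rfl
  | succ b hab ih =>
    have hsucc := recolorCount_succ σ b u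
    have hmono : recolorCount σ a u ≤ recolorCount σ b u := recolorCount_mono σ u hab
    split_ifs at hsucc with hb
    · rw [← hb]
      exact ih (by omega)
    · omega

end RecolorCount

section Neighborhood

variable {V : Type} (σ : ℕ → V → ℕ) (N : Finset V)

def colorsOn (p : ℕ) : Finset ℕ := N.image (σ p)

noncomputable def recolorCountOn (p : ℕ) : ℕ := ∑ u ∈ N, recolorCount σ p u

lemma recolorCountOn_mono : Monotone (recolorCountOn σ N) :=
  fun _ _ h => sum_le_sum fun u _ => recolorCount_mono σ u h

lemma recolorCountOn_succ (p : ℕ) :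
    recolorCountOn σ N (p + 1) = recolorCountOn σ N p + #{u ∈ N | σ p u ≠ σ (p + 1) u} := by
  simp only [recolorCountOn, recolorCount_succ, sum_add_distrib, card_filter, ite_not]

variable {σ N}

lemma recolorCountOn_succ_le {p : ℕ} {w : V} (hw : ∀ u, u ≠ w → σ p u = σ (p + 1) u) :
    recolorCountOn σ N (p + 1) ≤ recolorCountOn σ N p + 1 := by
  have hsub : {u ∈ N | σ p u ≠ σ (p + 1) u} ⊆ {w} := fun u hu => by
    by_contra huw
    exact (mem_filter.1 hu).2 (hw u (by simpa using huw))
  rw [recolorCountOn_succ]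
  simpa using card_le_card hsub

lemma colorsOn_eq_of_recolorCountOn_le {a b : ℕ} (hab : a ≤ b)
    (h : recolorCountOn σ N b ≤ recolorCountOn σ N a) : colorsOn σ N b = colorsOn σ N a := by
  have hle : ∀ u ∈ N, recolorCount σ a u ≤ recolorCount σ b u :=
    fun u _ => recolorCount_mono σ u hab
  have heq := (sum_eq_sum_iff_of_le hle).1 (le_antisymm (recolorCountOn_mono σ N hab) h)
  exact image_congr fun u hu => eq_of_recolorCount_eq hab (heq u hu).symm

lemma colorsOn_succ_subset (p : ℕ) :
    colorsOn σ N (p + 1) ⊆ colorsOn σ N p ∪ {u ∈ N | σ p u ≠ σ (p + 1) u}.image (σ (p + 1)) := by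
  intro x hx
  obtain ⟨u, hu, rfl⟩ := mem_image.1 hx
  by_cases h : σ p u = σ (p + 1) u
  · exact mem_union_left _ (mem_image.2 ⟨u, hu, h⟩)
  · exact mem_union_right _ (mem_image.2 ⟨u, mem_filter.2 ⟨hu, h⟩, rfl⟩)

lemma card_biUnion_colorsOn_le {a b : ℕ} (hab : a ≤ b) :
    #((Icc a b).biUnion (colorsOn σ N)) + recolorCountOn σ N a ≤ #N + recolorCountOn σ N b := by
  induction b, hab using Nat.le_induction with
  | base => simpa [colorsOn] using card_image_le (s := N) (f := σ a)
  | succ b hab ih =>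
    rw [← insert_Icc_right_eq_Icc_add_one (by omega), biUnion_insert, recolorCountOn_succ]
    have hsub : colorsOn σ N (b + 1) ∪ (Icc a b).biUnion (colorsOn σ N) ⊆
        (Icc a b).biUnion (colorsOn σ N) ∪ {u ∈ N | σ b u ≠ σ (b + 1) u}.image (σ (b + 1)) := by
      refine union_subset ((colorsOn_succ_subset b).trans (union_subset_union ?_ le_rfl))
        subset_union_left
      exact subset_biUnion_of_mem _ (mem_Icc.2 ⟨hab, le_rfl⟩)
    have := (card_le_card hsub).trans (card_union_le _ _)
    have := card_image_le (s := {u ∈ N | σ b u ≠ σ (b + 1) u}) (f := σ (b + 1))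
    omega

lemma exists_mem_forall_notMem_colorsOn (K : Finset ℕ) {p n B : ℕ} (hp : p ≤ n)
    (hpB : recolorCountOn σ N p ≤ B) (hcard : #N + B < #K + recolorCountOn σ N p) :
    ∃ b ∈ K, ∀ j, p ≤ j → j ≤ n → recolorCountOn σ N j ≤ B → b ∉ colorsOn σ N j := by
  set M := Nat.findGreatest (fun j => recolorCountOn σ N j ≤ B) n
  have hpM : p ≤ M := Nat.le_findGreatest hp hpB
  have hMB : recolorCountOn σ N M ≤ B :=
    Nat.findGreatest_spec (P := fun j => recolorCountOn σ N j ≤ B) hp hpB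
  have hbad := card_biUnion_colorsOn_le (σ := σ) (N := N) hpM
  obtain ⟨b, hbK, hb⟩ := exists_mem_notMem_of_card_lt_card
    (s := (Icc p M).biUnion (colorsOn σ N)) (t := K) (by omega)
  refine ⟨b, hbK, fun j hpj hjn hjB hbj => hb (mem_biUnion.2 ⟨j, ?_, hbj⟩)⟩
  exact mem_Icc.2 ⟨hpj, Nat.le_findGreatest hjn hjB⟩

end Neighborhood

section Recoloring

variable {V : Type} (G : SimpleGraph V) (L : V → Finset ℕ)

def IsLColoring (x : V → ℕ) : Prop := Proper G x ∧ ∀ u, x u ∈ L u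

def RecolorsTo (c : V → ℕ) (x y : V → ℕ) : Prop :=
  ∃ (m : ℕ) (τ : ℕ → V → ℕ), τ 0 = x ∧ τ m = y ∧ (∀ i ≤ m, IsLColoring G L (τ i)) ∧
    (∀ i < m, ∃ w, τ i w ≠ τ (i + 1) w ∧ ∀ u, u ≠ w → τ i u = τ (i + 1) u) ∧
    ∀ u, recolorCount τ m u = c u

variable {G L}

lemma RecolorsTo.refl {x : V → ℕ} (hx : IsLColoring G L x) : RecolorsTo G L 0 x x :=
  ⟨0, fun _ => x, rfl, rfl, fun _ _ => hx, fun _ hi => absurd hi (Nat.not_lt_zero _),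
    fun u => recolorCount_zero _ u⟩

lemma RecolorsTo.snoc {c : V → ℕ} {x y z : V → ℕ} {w : V} (h : RecolorsTo G L c x y)
    (hz : IsLColoring G L z) (hyz : ∀ u, u ≠ w → y u = z u) :
    RecolorsTo G L (fun u => c u + if y u = z u then 0 else 1) x z := by
  by_cases hzy : y = z
  · subst hzy
    simpa using h
  obtain ⟨m, τ, h0, hm, hcol, hstep, hcount⟩ := h
  have hw : y w ≠ z w := fun hw => hzy (funext fun u => by
    rcases eq_or_ne u w with rfl | hu
    exacts [hw, hyz u hu])
  refine ⟨m + 1, fun i => if i ≤ m then τ i else z, by simpa using h0, by simp, ?_, ?_, ?_⟩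
  · intro i _
    dsimp only
    split_ifs with him
    exacts [hcol i him, hz]
  · intro i hi
    rcases Nat.lt_succ_iff_lt_or_eq.1 hi with hi | rfl
    · simpa [hi.le, Nat.succ_le_of_lt hi] using hstep i hi
    · exact ⟨w, by simpa [hm] using hw, fun u hu => by simpa [hm] using hyz u hu⟩
  · intro u
    rw [recolorCount_succ, recolorCount_congr (τ := τ) fun i hi => by simp [hi], hcount u]
    simp [hm]

end Recoloring

section Greedy

variable {V : Type} [Fintype V] [DecidableEq V] {G : SimpleGraph V} [DecidableRel G.Adj]
  {L : V → Finset ℕ} {v : V}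

lemma isLColoring_update {x : V → ℕ}
    (hx : Proper (deleteVert G v) x ∧ ∀ u, u ≠ v → x u ∈ L u) {a : ℕ} (ha : a ∈ L v)
    (haN : a ∉ (G.neighborFinset v).image x) :
    IsLColoring G L (update x v a) := by
  have hfree : ∀ u, G.Adj v u → x u ≠ a := fun u hu hxu =>
    haN (mem_image.2 ⟨u, (G.mem_neighborFinset v u).2 hu, hxu⟩)
  refine ⟨fun a b hab => ?_, fun u => ?_⟩
  · rcases eq_or_ne a v with rfl | hav
    · simpa [hab.ne'] using (hfree b hab).symm
    rcases eq_or_ne b v with rfl | hbv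
    · simpa [hav] using hfree a hab.symm
    simpa [hav, hbv] using hx.1 ⟨hab, hav, hbv⟩
  · rcases eq_or_ne u v with rfl | huv
    · simpa using ha
    · simpa [huv] using hx.2 u huv

variable (G L v) in
/-- The state of the greedy extension after `p` steps of `σ`: `v` has color `a`, which stays free
on the neighborhood of `v` at least until the neighbors have been recolored `h` times in total;
`c` counts the recolorings so far, and the potential `(r + 1) * c v ≤ h` bounds those of `v`. -/
structure GreedyInvariant (α : V → ℕ) (σ : ℕ → V → ℕ) (n r p a h : ℕ) (c : V → ℕ) : Prop where
  recolorsTo : RecolorsTo G L c α (update (σ p) v a)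
  count_eq : ∀ u, u ≠ v → c u = recolorCount σ p u
  mem_list : a ∈ L v
  notMem_colorsOn : a ∉ colorsOn σ (G.neighborFinset v) p
  notMem_colorsOn_of_le : ∀ j, p ≤ j → j ≤ n →
    recolorCountOn σ (G.neighborFinset v) j ≤ h → a ∉ colorsOn σ (G.neighborFinset v) j
  mul_count_le : (r + 1) * c v ≤ h
  le_recolorCountOn : h ≤ recolorCountOn σ (G.neighborFinset v) p + r

variable {α : V → ℕ} {σ : ℕ → V → ℕ} {n r : ℕ}

lemma GreedyInvariant.zero (hα : IsLColoring G L α) (hσ0 : ∀ u, u ≠ v → σ 0 u = α u) :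
    GreedyInvariant G L v α σ n r 0 (α v) 0 0 := by
  have hσα : update (σ 0) v (α v) = α := funext fun u => by
    rcases eq_or_ne u v with rfl | huv
    exacts [update_self .., (update_of_ne huv ..).trans (hσ0 u huv)]
  have hfree : α v ∉ colorsOn σ (G.neighborFinset v) 0 := fun h => by
    obtain ⟨u, hu, hσu⟩ := mem_image.1 h
    have hadj := (G.mem_neighborFinset v u).1 hu
    exact hα.1 hadj (hσ0 u hadj.ne' ▸ hσu).symm
  refine ⟨hσα.symm ▸ RecolorsTo.refl hα, fun u _ => (recolorCount_zero σ u).symm, hα.2 v, hfree,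
    fun j _ _ hj => ?_, by simp, Nat.zero_le _⟩
  rwa [colorsOn_eq_of_recolorCountOn_le (Nat.zero_le j) (by simpa [recolorCountOn] using hj)]

variable {p a h : ℕ} {c : V → ℕ} {w : V}

lemma GreedyInvariant.succ_of_notMem (hI : GreedyInvariant G L v α σ n r p a h c)
    (hcol : Proper (deleteVert G v) (σ (p + 1)) ∧ ∀ u, u ≠ v → σ (p + 1) u ∈ L u)
    (hwv : w ≠ v) (hw : ∀ u, u ≠ w → σ p u = σ (p + 1) u)
    (ha : a ∉ colorsOn σ (G.neighborFinset v) (p + 1)) :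
    ∃ c', GreedyInvariant G L v α σ n r (p + 1) a h c' := by
  refine ⟨_, hI.recolorsTo.snoc (w := w) (isLColoring_update hcol hI.mem_list ha) fun u hu => ?_,
    fun u hu => ?_, hI.mem_list, ha, fun j hj => hI.notMem_colorsOn_of_le j (by omega), ?_, ?_⟩
  · rcases eq_or_ne u v with rfl | huv
    · simp
    · simpa [huv] using hw u hu
  · simp [hu, hI.count_eq u hu, recolorCount_succ]
  · simpa [hwv.symm] using hI.mul_count_le
  · exact hI.le_recolorCountOn.trans (by gcongr; exact recolorCountOn_mono _ _ p.le_succ)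

lemma GreedyInvariant.succ_of_mem (hI : GreedyInvariant G L v α σ n r p a h c) (hp : p < n)
    (hL : G.degree v + r + 2 ≤ #(L v))
    (hcol : Proper (deleteVert G v) (σ p) ∧ ∀ u, u ≠ v → σ p u ∈ L u)
    (hcol' : Proper (deleteVert G v) (σ (p + 1)) ∧ ∀ u, u ≠ v → σ (p + 1) u ∈ L u)
    (hw : ∀ u, u ≠ w → σ p u = σ (p + 1) u)
    (ha : a ∈ colorsOn σ (G.neighborFinset v) (p + 1)) :
    ∃ b c', GreedyInvariant G L v α σ n r (p + 1) b
      (recolorCountOn σ (G.neighborFinset v) (p + 1) + r) c' := by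
  have hh : h < recolorCountOn σ (G.neighborFinset v) (p + 1) := by
    by_contra! hle
    exact hI.notMem_colorsOn_of_le (p + 1) p.le_succ hp hle ha
  have hmono : recolorCountOn σ (G.neighborFinset v) p ≤
      recolorCountOn σ (G.neighborFinset v) (p + 1) := recolorCountOn_mono _ _ p.le_succ
  have hstep : recolorCountOn σ (G.neighborFinset v) (p + 1) ≤
      recolorCountOn σ (G.neighborFinset v) p + 1 := recolorCountOn_succ_le hw
  obtain ⟨b, hbL, hb⟩ := exists_mem_forall_notMem_colorsOn (σ := σ) (N := G.neighborFinset v)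
    (L v) hp.le (B := recolorCountOn σ (G.neighborFinset v) (p + 1) + r) (by omega)
    (by rw [G.card_neighborFinset_eq_degree]; omega)
  have hbp := hb p le_rfl hp.le (by omega)
  have hbp' := hb (p + 1) p.le_succ hp le_self_add
  have hab : a ≠ b := fun hab => hbp' (hab ▸ ha)
  have hrecolor := (hI.recolorsTo.snoc (w := v) (isLColoring_update hcol hbL hbp)
    fun u hu => by simp [hu]).snoc (w := w) (isLColoring_update hcol' hbL hbp') fun u hu => by
      rcases eq_or_ne u v with rfl | huv
      · simp
      · simpa [huv] using hw u hu
  refine ⟨b, _, hrecolor, fun u hu => ?_, hbL, hbp',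
    fun j hj => hb j (by omega), ?_, le_rfl⟩
  · simp [hu, hI.count_eq u hu, recolorCount_succ]
  · have := hI.mul_count_le
    simp only [update_self, if_neg hab, if_true, add_zero, mul_add_one]
    omega

lemma exists_greedyInvariant (hα : IsLColoring G L α) (hσ0 : ∀ u, u ≠ v → σ 0 u = α u)
    (hσcol : ∀ i ≤ n, Proper (deleteVert G v) (σ i) ∧ ∀ u, u ≠ v → σ i u ∈ L u)
    (hstep : ∀ i < n, ∃ w, w ≠ v ∧ ∀ u, u ≠ w → σ i u = σ (i + 1) u)
    (hL : G.degree v + r + 2 ≤ #(L v)) :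
    ∀ p ≤ n, ∃ a h c, GreedyInvariant G L v α σ n r p a h c := by
  intro p
  induction p with
  | zero => exact fun _ => ⟨_, _, _, GreedyInvariant.zero hα hσ0⟩
  | succ p ih =>
    intro hp
    obtain ⟨a, h, c, hI⟩ := ih (by omega)
    obtain ⟨w, hwv, hw⟩ := hstep p hp
    by_cases ha : a ∈ colorsOn σ (G.neighborFinset v) (p + 1)
    · obtain ⟨b, c', hI'⟩ := hI.succ_of_mem hp hL (hσcol p (by omega)) (hσcol (p + 1) hp) hw ha
      exact ⟨b, _, c', hI'⟩
    · obtain ⟨c', hI'⟩ := hI.succ_of_notMem (hσcol (p + 1) hp) hwv hw ha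
      exact ⟨a, h, c', hI'⟩

end Greedy

end ExtensionLemma

open ExtensionLemma in
/-- the extension lemma. Given `L`-colorings `α, β` of `G*`, a vertex `v`
with `|L(v)| ≥ d(v) + 2`, and a recoloring sequence `σ` of `G** = G* − v` from
`α|G**` to `β|G**` recoloring the neighbors of `v` a total of `t` times, `σ` extends
to a recoloring sequence of `G*` from `α` to `β` recoloring every vertex `u ≠ v`
exactly as often as `σ` does, and recoloring `v` at most
`⌈t / (|L(v)| − d(v) − 1)⌉ + 1` times. -/
theorem extension_lemma {V : Type} [Fintype V] [DecidableEq V]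
    (G : SimpleGraph V) [DecidableRel G.Adj]
    (L : V → Finset ℕ) (v : V) (hL : G.degree v + 2 ≤ (L v).card)
    (α β : V → ℕ)
    (hα : Proper G α ∧ ∀ u, α u ∈ L u) (hβ : Proper G β ∧ ∀ u, β u ∈ L u)
    (n : ℕ) (σ : ℕ → V → ℕ)
    (hσ0 : ∀ u, u ≠ v → σ 0 u = α u) (hσn : ∀ u, u ≠ v → σ n u = β u)
    (hσcol : ∀ i ≤ n, Proper (deleteVert G v) (σ i) ∧ ∀ u, u ≠ v → σ i u ∈ L u)
    (hstep : ∀ i < n, ∃ w, w ≠ v ∧ σ i w ≠ σ (i + 1) w ∧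
      ∀ u, u ≠ w → σ i u = σ (i + 1) u) :
    ∃ (m : ℕ) (σ' : ℕ → V → ℕ),
      σ' 0 = α ∧ σ' m = β ∧
      (∀ i ≤ m, Proper G (σ' i) ∧ ∀ u, σ' i u ∈ L u) ∧
      (∀ i < m, ∃ w, σ' i w ≠ σ' (i + 1) w ∧ ∀ u, u ≠ w → σ' i u = σ' (i + 1) u) ∧
      (∀ u, u ≠ v → recolorCount σ' m u = recolorCount σ n u) ∧
      recolorCount σ' m v ≤
        ((∑ u ∈ G.neighborFinset v, recolorCount σ n u) +
            ((L v).card - G.degree v - 1) - 1) /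
          ((L v).card - G.degree v - 1) + 1 := by
  set r := (L v).card - G.degree v - 2
  obtain ⟨a, h, c, hI⟩ := exists_greedyInvariant (r := r) hα hσ0 hσcol
    (fun i hi => (hstep i hi).imp fun _ hw => ⟨hw.1, hw.2.2⟩) (by omega) n le_rfl
  obtain ⟨m, σ', h0, hm, hcol, hsteps, hcount⟩ :=
    hI.recolorsTo.snoc (w := v) hβ fun u hu => by simpa [hu] using hσn u hu
  refine ⟨m, σ', h0, hm, hcol, hsteps, fun u hu => by simp [hcount, hu, hσn u hu, hI.count_eq],
    ?_⟩
  have hk : (L v).card - G.degree v - 1 = r + 1 := by omega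
  have hcv : c v ≤ (recolorCountOn σ (G.neighborFinset v) n + r) / (r + 1) :=
    (Nat.le_div_iff_mul_le r.succ_pos).2 (by linarith [hI.mul_count_le, hI.le_recolorCountOn])
  rw [hcount, hk, Nat.add_succ_sub_one]
  exact add_le_add hcv (by split_ifs <;> simp)
end

section
/- Let G be a d-degenerate graph and L a list assignment of G with |L(v)| ≥ 2d + 2 for every vertex v. If c is a positive integer satisfying ⌈dc/(d+1)⌉ + 1 ≤ c, then for any two L-colorings α and β of G there is a recoloring sequence from α to β recoloring each vertex at most c times; in particular the diameter of the L-recoloring graph of G is at most c·|V(G)|. -/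
/-- An `L`-coloring of `G`: a proper coloring respecting the lists `L`. -/
def IsLColoring {V : Type} (G : SimpleGraph V) (L : V → Finset ℕ) (c : V → ℕ) : Prop :=
  Proper G c ∧ ∀ v, c v ∈ L v

/-- A recoloring sequence of `L`-colorings from `α` to `β` with `n` single-vertex
recoloring steps. -/
def RecolorSeq {V : Type} (G : SimpleGraph V) (L : V → Finset ℕ) (α β : V → ℕ)
    (n : ℕ) (σ : ℕ → V → ℕ) : Prop :=
  σ 0 = α ∧ σ n = β ∧ (∀ i ≤ n, IsLColoring G L (σ i)) ∧
  ∀ i < n, ∃ v, σ i v ≠ σ (i + 1) v ∧ ∀ u, u ≠ v → σ i u = σ (i + 1) u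

/-- `G` is `d`-degenerate: every nonempty (induced) subgraph has a vertex of
degree at most `d` in it. -/
def Degenerate {V : Type} (G : SimpleGraph V) (d : ℕ) : Prop :=
  ∀ s : Set V, s.Nonempty → ∃ v ∈ s, ((G.neighborSet v) ∩ s).ncard ≤ d

/-! Induction on the vertex set. Remove a vertex `v` with at most `d` neighbours and recolor the
rest by induction, so that the neighbours of `v` are recolored at most `t ≤ d c` times in total.
Insert recolorings of `v` lazily: only when a neighbour is about to take the color of `v`, recolor
`v` to a color of `L v` avoiding the current colors of its neighbours and the next `d + 1` colors
its neighbours will take; `|L v| ≥ 2d + 2` leaves such a color. Consecutive recolorings of `v` are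
then separated by at least `d + 1` neighbour moves, so `v` is recolored at most `⌈t / (d + 1)⌉`
times, plus once at the end to reach `β v`. -/

open Finset Function

namespace DegenerateRecoloring

variable {V : Type} {G : SimpleGraph V} {L : V → Finset ℕ} {s t : Finset V}
  {α β γ δ : V → ℕ} {m : V × ℕ} {ms : List (V × ℕ)} {v : V} {N : Finset V} {k c : ℕ}

/-- A move `(u, a)` recolors `u` to `a`; legality only involves the vertices of `s`. -/
structure IsLegalMove (G : SimpleGraph V) (L : V → Finset ℕ) (s : Finset V) (γ : V → ℕ)
    (m : V × ℕ) : Prop where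
  mem : m.1 ∈ s
  mem_list : m.2 ∈ L m.1
  ne_self : m.2 ≠ γ m.1
  ne_adj : ∀ u ∈ s, G.Adj m.1 u → m.2 ≠ γ u

lemma IsLegalMove.congr (hm : IsLegalMove G L s γ m) (hγ : ∀ u ∈ s, γ u = δ u) :
    IsLegalMove G L s δ m :=
  ⟨hm.mem, hm.mem_list, hγ _ hm.mem ▸ hm.ne_self,
    fun u hu hadj => hγ u hu ▸ hm.ne_adj u hu hadj⟩

def IsLColoringOn (G : SimpleGraph V) (L : V → Finset ℕ) (s : Finset V) (γ : V → ℕ) : Prop :=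
  (∀ a ∈ s, ∀ b ∈ s, G.Adj a b → γ a ≠ γ b) ∧ ∀ u ∈ s, γ u ∈ L u

lemma isLColoringOn_univ [Fintype V] : IsLColoringOn G L univ γ ↔ IsLColoring G L γ := by
  simp [IsLColoringOn, IsLColoring, Proper]

lemma IsLColoringOn.of_eqOn (hγ : IsLColoringOn G L s γ) (hts : t ⊆ s)
    (hδ : ∀ u ∈ t, δ u = γ u) : IsLColoringOn G L t δ :=
  ⟨fun a ha b hb hab => hδ a ha ▸ hδ b hb ▸ hγ.1 a (hts ha) b (hts hb) hab,
    fun u hu => hδ u hu ▸ hγ.2 u (hts hu)⟩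

lemma exists_color_avoiding (hcard : N.card + k < (L v).card) (γ : V → ℕ) (l : List ℕ) :
    ∃ a ∈ L v, (∀ u ∈ N, a ≠ γ u) ∧ a ∉ l.take k := by
  have hlt : (N.image γ ∪ (l.take k).toFinset).card < (L v).card := by
    refine lt_of_le_of_lt ((card_union_le _ _).trans (add_le_add card_image_le ?_)) hcard
    exact (List.toFinset_card_le _).trans (List.length_take_le _ _)
  obtain ⟨a, haL, ha⟩ := exists_mem_notMem_of_card_lt_card hlt
  simp only [mem_union, mem_image, List.mem_toFinset, not_or, not_exists, not_and] at ha
  exact ⟨a, haL, fun u hu h => ha.1 u hu h.symm, ha.2⟩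

variable [DecidableEq V]

def play (γ : V → ℕ) (ms : List (V × ℕ)) : V → ℕ :=
  ms.foldl (fun γ m => update γ m.1 m.2) γ

@[simp] lemma play_nil : play γ [] = γ := rfl

@[simp] lemma play_cons : play γ (m :: ms) = play (update γ m.1 m.2) ms := rfl

lemma play_append (ms₁ ms₂ : List (V × ℕ)) :
    play γ (ms₁ ++ ms₂) = play (play γ ms₁) ms₂ :=
  List.foldl_append ..

lemma play_take_succ {i : ℕ} (hi : i < ms.length) :
    play γ (ms.take (i + 1)) = update (play γ (ms.take i)) ms[i].1 ms[i].2 := by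
  rw [List.take_add_one, List.getElem?_eq_getElem hi, Option.toList_some, play_append]
  rfl

lemma play_update_comm (hms : ∀ m ∈ ms, m.1 ≠ v) (a : ℕ) :
    play (update γ v a) ms = update (play γ ms) v a := by
  induction ms generalizing γ with
  | nil => rfl
  | cons m ms ih =>
    simp only [List.forall_mem_cons] at hms
    rw [play_cons, play_cons, update_comm hms.1.symm, ih hms.2]

def IsLegalSeq (G : SimpleGraph V) (L : V → Finset ℕ) (s : Finset V) :
    (V → ℕ) → List (V × ℕ) → Prop
  | _, [] => True
  | γ, m :: ms => IsLegalMove G L s γ m ∧ IsLegalSeq G L s (update γ m.1 m.2) ms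

@[simp] lemma isLegalSeq_nil : IsLegalSeq G L s γ [] := trivial

@[simp] lemma isLegalSeq_cons :
    IsLegalSeq G L s γ (m :: ms) ↔
      IsLegalMove G L s γ m ∧ IsLegalSeq G L s (update γ m.1 m.2) ms := Iff.rfl

lemma isLegalSeq_append {ms₁ ms₂ : List (V × ℕ)} :
    IsLegalSeq G L s γ (ms₁ ++ ms₂) ↔
      IsLegalSeq G L s γ ms₁ ∧ IsLegalSeq G L s (play γ ms₁) ms₂ := by
  induction ms₁ generalizing γ with
  | nil => simp
  | cons m ms₁ ih => simp [ih, and_assoc]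

lemma IsLegalSeq.getElem (hms : IsLegalSeq G L s γ ms) {i : ℕ} (hi : i < ms.length) :
    IsLegalMove G L s (play γ (ms.take i)) ms[i] := by
  rw [← List.take_append_drop i ms, isLegalSeq_append, List.drop_eq_getElem_cons hi,
    isLegalSeq_cons] at hms
  exact hms.2.1

lemma IsLegalSeq.mem_fst (hms : IsLegalSeq G L s γ ms) : ∀ m ∈ ms, m.1 ∈ s := by
  induction ms generalizing γ with
  | nil => simp
  | cons m ms ih => exact List.forall_mem_cons.2 ⟨hms.1.mem, ih hms.2⟩

lemma IsLegalSeq.congr (hms : IsLegalSeq G L s γ ms) (hγ : ∀ u ∈ s, γ u = δ u) :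
    IsLegalSeq G L s δ ms := by
  induction ms generalizing γ δ with
  | nil => trivial
  | cons m ms ih =>
    refine ⟨hms.1.congr hγ, ih hms.2 fun u hu => ?_⟩
    rcases eq_or_ne u m.1 with rfl | hu'
    · simp
    · simp [update_of_ne hu', hγ u hu]

lemma IsLegalMove.insert (hm : IsLegalMove G L s γ m) (hv : G.Adj m.1 v → m.2 ≠ γ v) :
    IsLegalMove G L (insert v s) γ m := by
  refine ⟨mem_insert_of_mem hm.mem, hm.mem_list, hm.ne_self, fun u hu hadj => ?_⟩
  rcases mem_insert.1 hu with rfl | hu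
  exacts [hv hadj, hm.ne_adj u hu hadj]

lemma IsLegalMove.update_apply_ne_iff (hm : IsLegalMove G L s γ m) (u : V) :
    update γ m.1 m.2 u ≠ γ u ↔ m.1 = u := by
  rcases eq_or_ne m.1 u with rfl | hu
  · simpa using hm.ne_self
  · simp [update_of_ne hu.symm, hu]

lemma IsLColoringOn.update (hγ : IsLColoringOn G L s γ) (hm : IsLegalMove G L s γ m) :
    IsLColoringOn G L s (update γ m.1 m.2) := by
  refine ⟨fun a ha b hb hab => ?_, fun u hu => ?_⟩
  · rcases eq_or_ne a m.1 with rfl | ha'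
    · rw [update_self, update_of_ne (G.ne_of_adj hab).symm]
      exact hm.ne_adj b hb hab
    rcases eq_or_ne b m.1 with rfl | hb'
    · rw [update_self, update_of_ne ha']
      exact (hm.ne_adj a ha hab.symm).symm
    rw [update_of_ne ha', update_of_ne hb']
    exact hγ.1 a ha b hb hab
  · rcases eq_or_ne u m.1 with rfl | hu'
    · simpa using hm.mem_list
    · simpa [update_of_ne hu'] using hγ.2 u hu

lemma IsLColoringOn.play (hγ : IsLColoringOn G L s γ) (hms : IsLegalSeq G L s γ ms) :
    IsLColoringOn G L s (play γ ms) := by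
  induction ms generalizing γ with
  | nil => exact hγ
  | cons m ms ih => exact ih (hγ.update hms.1) hms.2

def nbrColors (N : Finset V) (ms : List (V × ℕ)) : List ℕ :=
  (ms.filter (·.1 ∈ N)).map Prod.snd

lemma nbrColors_cons (N : Finset V) :
    nbrColors N (m :: ms) = if m.1 ∈ N then m.2 :: nbrColors N ms else nbrColors N ms := by
  by_cases h : m.1 ∈ N <;> simp [nbrColors, h]

lemma length_nbrColors (N : Finset V) (ms : List (V × ℕ)) :
    (nbrColors N ms).length = ∑ u ∈ N, (ms.map Prod.fst).count u := by
  induction ms with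
  | nil => simp [nbrColors]
  | cons m ms ih =>
    rw [nbrColors_cons]
    split_ifs with h <;> simp [List.count_cons, sum_add_distrib, ih, h]

lemma length_nbrColors_le (hc : ∀ u, (ms.map Prod.fst).count u ≤ c) :
    (nbrColors N ms).length ≤ N.card * c := by
  rw [length_nbrColors, ← smul_eq_mul]
  exact sum_le_card_nsmul _ _ _ fun u _ => hc u

lemma notMem_take_nbrColors_tail {x j : ℕ} (h : x ∉ (nbrColors N (m :: ms)).take j) :
    x ∉ (nbrColors N ms).take (if m.1 ∈ N then j - 1 else j) := by
  rcases j with _ | j <;> by_cases hmN : m.1 ∈ N <;> simp_all [nbrColors_cons]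

lemma isLegalMove_insert_self {a : ℕ} (hN : ∀ u ∈ s, G.Adj v u → u ∈ N) (haL : a ∈ L v)
    (haγ : a ≠ γ v) (haN : ∀ u ∈ N, a ≠ γ u) : IsLegalMove G L (insert v s) γ (v, a) := by
  refine ⟨mem_insert_self v s, haL, haγ, fun u hu hadj => ?_⟩
  rcases mem_insert.1 hu with rfl | hu
  exacts [absurd hadj G.irrefl, haN u (hN u hu hadj)]

section Extension

variable (hv : v ∉ s) (hN : ∀ u ∈ s, G.Adj v u → u ∈ N) (hk : 0 < k)
  (hcard : N.card + k < (L v).card)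
include hv hN hk hcard

/-- Lazy insertion of moves at `v`: `v` is recolored only right before a move at `N` that would
clash with it, and then to a color avoiding its neighbours and the next `k` colors taken in `N`.
If the current color of `v` is already safe for the first `j` of the `t` moves at `N`, this
recolors `v` at most `⌈(t - j) / k⌉` times. -/
theorem exists_isLegalSeq_insert (ms : List (V × ℕ)) (γ : V → ℕ) (j : ℕ)
    (hms : IsLegalSeq G L s γ ms) (hsafe : γ v ∉ (nbrColors N ms).take j) :
    ∃ ms₁, IsLegalSeq G L (insert v s) γ ms₁ ∧ (∀ u ≠ v, play γ ms₁ u = play γ ms u) ∧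
      (∀ u ≠ v, (ms₁.map Prod.fst).count u = (ms.map Prod.fst).count u) ∧
      (ms₁.map Prod.fst).count v ≤ ((nbrColors N ms).length + (k - 1) - j) / k := by
  induction ms generalizing γ j with
  | nil => exact ⟨[], trivial, fun _ _ => rfl, fun _ _ => rfl, by simp⟩
  | cons m ms ih =>
  obtain ⟨hm, hms⟩ := hms
  have hmv : m.1 ≠ v := ne_of_mem_of_not_mem hm.mem hv
  by_cases hclash : m.1 ∈ N ∧ m.2 = γ v
  · obtain ⟨hmN, hmγ⟩ := hclash
    have hj : j = 0 := by
      rcases j with _ | j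
      · rfl
      · simp [nbrColors_cons, hmN, hmγ] at hsafe
    subst hj
    obtain ⟨a, haL, haN, hanext⟩ := exists_color_avoiding hcard γ (nbrColors N (m :: ms))
    rw [nbrColors_cons, if_pos hmN, List.take_cons hk, List.mem_cons, not_or] at hanext
    have hswap : update (update γ v a) m.1 m.2 = update (update γ m.1 m.2) v a :=
      update_comm hmv.symm _ _ _
    have hagree : ∀ u ∈ s, update γ m.1 m.2 u = update (update γ v a) m.1 m.2 u := by
      intro u hu
      rw [hswap, update_of_ne (ne_of_mem_of_not_mem hu hv)]
    obtain ⟨rest, hrest, hplay, hcount, hcountv⟩ :=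
      ih _ (k - 1) (hms.congr hagree) (by simpa [update_of_ne hmv.symm] using hanext.2)
    refine ⟨(v, a) :: m :: rest, ⟨isLegalMove_insert_self hN haL (hmγ ▸ hanext.1) haN,
      (hm.congr fun u hu => ?_).insert ?_, hrest⟩, fun u hu => ?_, fun u hu => ?_, ?_⟩
    · rw [update_of_ne (ne_of_mem_of_not_mem hu hv)]
    · simpa using fun _ => Ne.symm hanext.1
    · rw [play_cons, play_cons, play_cons, hplay u hu, hswap,
        play_update_comm (fun m' hm' => ne_of_mem_of_not_mem (hms.mem_fst m' hm') hv),
        update_of_ne hu]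
    · simp [List.count_cons, hcount u hu, Ne.symm hu]
    · have hk' : (nbrColors N ms).length + 1 + (k - 1) = (nbrColors N ms).length + k := by omega
      simp only [nbrColors_cons, hmN, if_true, List.length_cons, List.map_cons,
        List.count_cons_self, List.count_cons_of_ne hmv, Nat.add_sub_cancel, Nat.sub_zero, hk',
        Nat.add_div_right _ hk] at hcountv ⊢
      omega
  · obtain ⟨rest, hrest, hplay, hcount, hcountv⟩ :=
      ih (update γ m.1 m.2) _ hms
        (by rw [update_of_ne hmv.symm]; exact notMem_take_nbrColors_tail hsafe)
    refine ⟨m :: rest, ⟨hm.insert fun hadj h => hclash ⟨hN _ hm.mem hadj.symm, h⟩, hrest⟩,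
      fun u hu => hplay u hu, fun u hu => by simp [List.count_cons, hcount u hu], ?_⟩
    simp only [List.map_cons, List.count_cons_of_ne hmv, nbrColors_cons]
    refine hcountv.trans (Nat.div_le_div_right ?_)
    split_ifs
    · simp only [List.length_cons]; omega
    · omega

end Extension

lemma IsLegalSeq.exists_append_recolor (hms : IsLegalSeq G L s γ ms)
    (hβ : IsLColoringOn G L s β) (hv : v ∈ s) (hoff : ∀ u ≠ v, play γ ms u = β u) :
    ∃ ms₂, IsLegalSeq G L s γ ms₂ ∧ play γ ms₂ = β ∧
      ∀ u, (ms₂.map Prod.fst).count u ≤ (ms.map Prod.fst).count u + if u = v then 1 else 0 := by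
  by_cases hfin : play γ ms v = β v
  · refine ⟨ms, hms, funext fun u => ?_, fun u => le_self_add⟩
    rcases eq_or_ne u v with rfl | hu
    exacts [hfin, hoff u hu]
  · refine ⟨ms ++ [(v, β v)], isLegalSeq_append.2 ⟨hms, ⟨hv, hβ.2 v hv, Ne.symm hfin, ?_⟩, trivial⟩,
      funext fun u => ?_, fun u => ?_⟩
    · intro u hu hadj
      rw [hoff u (G.ne_of_adj hadj).symm]
      exact hβ.1 v hv u hu hadj
    · rcases eq_or_ne u v with rfl | hu
      · simp [play_append]
      · simp [play_append, update_of_ne hu, hoff u hu]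
    · rcases eq_or_ne u v with rfl | hu <;> simp [List.count_append, Ne.symm, *]

theorem exists_isLegalSeq_of_degenerate {d : ℕ} (hdeg : Degenerate G d)
    (hL : ∀ v, 2 * d + 2 ≤ (L v).card) (hcc : (d * c + d) / (d + 1) + 1 ≤ c) (s : Finset V) (α β : V → ℕ)
    (hβ : IsLColoringOn G L s β) (hout : ∀ u ∉ s, β u = α u) :
    ∃ ms, IsLegalSeq G L s α ms ∧ play α ms = β ∧ ∀ u, (ms.map Prod.fst).count u ≤ c := by
  classical
  induction s using Finset.strongInduction generalizing β with
  | H s ih =>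
  rcases s.eq_empty_or_nonempty with rfl | hne
  · exact ⟨[], trivial, funext fun u => (hout u (notMem_empty u)).symm, by simp⟩
  obtain ⟨v, hv, hdv⟩ := hdeg s (coe_nonempty.2 hne)
  set N : Finset V := s.filter (G.Adj v)
  have hN : N.card ≤ d := by
    rwa [show G.neighborSet v ∩ s = N by ext; simp [N, and_comm], Set.ncard_coe_finset] at hdv
  have hβ' : ∀ u ∈ s.erase v, update β v (α v) u = β u := fun u hu =>
    update_of_ne (ne_of_mem_erase hu) _ _
  obtain ⟨ms, hms, hplay, hcount⟩ := ih (s.erase v) (erase_ssubset hv) _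
    (hβ.of_eqOn (erase_subset v s) hβ') fun u hu => by
      rcases eq_or_ne u v with rfl | huv
      · simp
      · rw [update_of_ne huv, hout u fun h => hu (mem_erase.2 ⟨huv, h⟩)]
  obtain ⟨ms₁, hms₁, hplay₁, hcount₁, hcountv⟩ := exists_isLegalSeq_insert (N := N) (k := d + 1)
    (notMem_erase v s) (fun u hu huv => mem_filter.2 ⟨mem_of_mem_erase hu, huv⟩) d.succ_pos
    (by have := hL v; omega) ms α 0 hms (by simp)
  rw [insert_erase hv] at hms₁
  obtain ⟨ms₂, hms₂, hplay₂, hcount₂⟩ := hms₁.exists_append_recolor hβ hv fun u hu => by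
    rw [hplay₁ u hu, hplay, update_of_ne hu]
  refine ⟨ms₂, hms₂, hplay₂, fun u => (hcount₂ u).trans ?_⟩
  rcases eq_or_ne u v with rfl | hu
  · have ht : (nbrColors N ms).length + d ≤ d * c + d := by
      have := (length_nbrColors_le hcount (N := N)).trans (Nat.mul_le_mul_right c hN)
      omega
    rw [Nat.add_sub_cancel, Nat.sub_zero] at hcountv
    have := hcountv.trans (Nat.div_le_div_right (c := d + 1) ht)
    simp only [if_true]
    omega
  · simpa [hu, hcount₁ u hu] using hcount u

lemma ncard_setOf_lt_and (p : ℕ → Prop) [DecidablePred p] (n : ℕ) :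
    {i | i < n ∧ p i}.ncard = Nat.count p n := by
  rw [Nat.count_eq_card_filter_range, ← Set.ncard_coe_finset]
  congr
  ext
  simp

lemma count_getElem?_eq_some {α : Type*} [DecidableEq α] (l : List α) (a : α) :
    Nat.count (fun i => l[i]? = some a) l.length = l.count a := by
  induction l with
  | nil => simp
  | cons x l ih => simp [Nat.count_succ', ih, List.count_cons]

theorem IsLegalSeq.recolorCount_eq (hms : IsLegalSeq G L s γ ms) (u : V) :
    recolorCount (fun i => play γ (ms.take i)) ms.length u = (ms.map Prod.fst).count u := by
  have hsteps : {i | i < ms.length ∧ play γ (ms.take i) u ≠ play γ (ms.take (i + 1)) u} =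
      {i | i < ms.length ∧ (ms.map Prod.fst)[i]? = some u} := by
    refine Set.ext fun i => and_congr_right fun hi => ?_
    rw [play_take_succ hi, ne_comm, (hms.getElem hi).update_apply_ne_iff]
    simp [hi]
  rw [recolorCount, hsteps, ncard_setOf_lt_and, ← List.length_map Prod.fst,
    count_getElem?_eq_some]

theorem IsLegalSeq.recolorSeq [Fintype V] (hα : IsLColoring G L α)
    (hms : IsLegalSeq G L univ α ms) :
    RecolorSeq G L α (play α ms) ms.length (fun i => play α (ms.take i)) := by
  refine ⟨rfl, by simp, fun i _ => ?_, fun i hi => ⟨ms[i].1, ?_, fun u hu => ?_⟩⟩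
  · have hpre := (isLegalSeq_append.1 ((List.take_append_drop i ms).symm ▸ hms)).1
    exact isLColoringOn_univ.1 ((isLColoringOn_univ.2 hα).play hpre)
  · simpa [play_take_succ hi] using (hms.getElem hi).ne_self.symm
  · dsimp only
    rw [play_take_succ hi, update_of_ne hu]

end DegenerateRecoloring

open DegenerateRecoloring

theorem degenerate_recoloring_general {V : Type} [Fintype V] (G : SimpleGraph V)
    (L : V → Finset ℕ) (d c : ℕ)
    (hdeg : Degenerate G d)
    (hL : ∀ v, 2 * d + 2 ≤ (L v).card)
    (hcc : (d * c + d) / (d + 1) + 1 ≤ c) :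
    ∀ α β : V → ℕ, IsLColoring G L α → IsLColoring G L β →
      ∃ (n : ℕ) (σ : ℕ → V → ℕ), n ≤ c * Fintype.card V ∧
        RecolorSeq G L α β n σ ∧ ∀ v, recolorCount σ n v ≤ c := by
  classical
  intro α β hα hβ
  obtain ⟨ms, hms, hplay, hcount⟩ :=
    exists_isLegalSeq_of_degenerate hdeg hL hcc univ α β (isLColoringOn_univ.2 hβ) (by simp)
  refine ⟨ms.length, fun i => play α (ms.take i), ?_, hplay ▸ hms.recolorSeq hα,
    fun u => hms.recolorCount_eq u ▸ hcount u⟩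
  calc ms.length = (nbrColors univ ms).length := by simp [nbrColors]
    _ ≤ Fintype.card V * c := length_nbrColors_le hcount
    _ = c * Fintype.card V := Nat.mul_comm _ _

/-- if `G` is `d`-degenerate, `|L(v)| ≥ 2d + 2` for all `v`, and
`c > 0` satisfies `⌈dc/(d+1)⌉ + 1 ≤ c`, then between any two `L`-colorings of `G`
there is a recoloring sequence recoloring every vertex at most `c` times;
in particular it has at most `c·|V(G)|` steps. -/
theorem degenerate_recoloring {V : Type} [Fintype V] (G : SimpleGraph V)
    (L : V → Finset ℕ) (d c : ℕ)
    (hdeg : Degenerate G d)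
    (hL : ∀ v, 2 * d + 2 ≤ (L v).card)
    (hc : 0 < c) (hcc : (d * c + d) / (d + 1) + 1 ≤ c) :
    ∀ α β : V → ℕ, IsLColoring G L α → IsLColoring G L β →
      ∃ (n : ℕ) (σ : ℕ → V → ℕ), n ≤ c * Fintype.card V ∧
        RecolorSeq G L α β n σ ∧ ∀ v, recolorCount σ n v ≤ c :=
  degenerate_recoloring_general G L d c hdeg hL hcc
end

section
/- Let G be a k-colorable graph with independence number at most p (p ≥ 2, k ≥ 2), and let k' ≥ ⌊pk/2⌋ + 1. Then for any two proper k'-colorings c₁ and c₂ of G, there is a sequence of single-vertex recolorings transforming c₁ into c₂ (through proper k'-colorings) in which each vertex is recolored at most 4 times. In particular, the diameter of 𝒢(G, k') is at most 4|V(G)|. -/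
open Finset Function

variable {V α : Type}

theorem recolorCount_eq_sum [DecidableEq α] (σ : ℕ → V → α) (n : ℕ) (u : V) :
    recolorCount σ n u = ∑ i ∈ range n, if σ i u ≠ σ (i + 1) u then 1 else 0 := by
  rw [recolorCount, ← card_filter, ← Set.ncard_coe_finset]
  congr 1
  ext i
  simp

theorem RecolorSeqP.le_sum_recolorCount [Fintype V] {G : SimpleGraph V} {c c' : V → α}
    {n : ℕ} {σ : ℕ → V → α} (hσ : RecolorSeqP G c c' n σ) :
    n ≤ ∑ v, recolorCount σ n v := by
  classical
  simp only [recolorCount_eq_sum]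
  rw [sum_comm]
  calc n = ∑ _i ∈ range n, 1 := by simp
    _ ≤ _ := sum_le_sum fun i hi => by
      obtain ⟨v, hv, -⟩ := hσ.2.2.2 i (mem_range.mp hi)
      calc 1 = if σ i v ≠ σ (i + 1) v then 1 else 0 := (if_pos hv).symm
        _ ≤ _ := single_le_sum (f := fun v => if σ i v ≠ σ (i + 1) v then 1 else 0)
          (fun _ _ => Nat.zero_le _) (mem_univ v)

def Reconfigures (G : SimpleGraph V) (c c' : V → α) (b : V → ℕ) : Prop :=
  ∃ n σ, RecolorSeqP G c c' n σ ∧ ∀ v, recolorCount σ n v ≤ b v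

namespace Reconfigures

variable {G : SimpleGraph V} {c c' c'' : V → α} {b b' : V → ℕ}

theorem refl (hc : Proper G c) : Reconfigures G c c 0 :=
  ⟨0, fun _ => c, ⟨rfl, rfl, fun _ _ => hc, fun _ h => absurd h (Nat.not_lt_zero _)⟩,
    fun v => by simp [recolorCount]⟩

theorem mono (h : Reconfigures G c c' b) (hb : b ≤ b') : Reconfigures G c c' b' :=
  let ⟨n, σ, hσ, hcount⟩ := h
  ⟨n, σ, hσ, fun v => (hcount v).trans (hb v)⟩

theorem proper_right (h : Reconfigures G c c' b) : Proper G c' := by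
  obtain ⟨n, σ, ⟨-, hn, hproper, -⟩, -⟩ := h
  exact hn ▸ hproper n le_rfl

theorem symm (h : Reconfigures G c c' b) : Reconfigures G c' c b := by
  classical
  obtain ⟨n, σ, ⟨h0, hn, hproper, hstep⟩, hcount⟩ := h
  refine ⟨n, fun i => σ (n - i), ⟨by simpa, by simpa, fun i _ => hproper _ (Nat.sub_le n i),
    fun i hi => ?_⟩, fun v => ?_⟩
  · obtain ⟨v, hv, hu⟩ := hstep (n - 1 - i) (by omega)
    rw [show n - 1 - i + 1 = n - i by omega, show n - 1 - i = n - (i + 1) by omega] at hv hu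
    exact ⟨v, Ne.symm hv, fun u huv => (hu u huv).symm⟩
  · calc recolorCount (fun i => σ (n - i)) n v = recolorCount σ n v := by
          rw [recolorCount_eq_sum, recolorCount_eq_sum, ← sum_range_reflect]
          refine sum_congr rfl fun i hi => ?_
          have hi := mem_range.mp hi
          rw [show n - (n - 1 - i) = i + 1 by omega, show n - (n - 1 - i + 1) = i by omega]
          simp only [ne_comm]
      _ ≤ b v := hcount v

theorem trans (h : Reconfigures G c c' b) (h' : Reconfigures G c' c'' b') :
    Reconfigures G c c'' (b + b') := by
  classical
  obtain ⟨n, σ, ⟨h0, hn, hproper, hstep⟩, hcount⟩ := h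
  obtain ⟨m, τ, ⟨h0', hm, hproper', hstep'⟩, hcount'⟩ := h'
  set ρ : ℕ → V → α := fun i => if i ≤ n then σ i else τ (i - n)
  have hleft : ∀ i ≤ n, ρ i = σ i := fun i hi => if_pos hi
  have hright : ∀ j, ρ (n + j) = τ j := fun j => by
    rcases j with _ | j
    · simp [ρ, hn, h0']
    · simp [ρ]
  refine ⟨n + m, ρ, ⟨by simp [hleft, h0], by simp [hright, hm], fun i hi => ?_, fun i hi => ?_⟩,
    fun v => ?_⟩
  · rcases le_or_gt i n with hi' | hi'
    · rw [hleft i hi']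
      exact hproper i hi'
    · obtain ⟨j, rfl⟩ := Nat.exists_eq_add_of_le hi'.le
      rw [hright]
      exact hproper' j (by omega)
  · rcases lt_or_ge i n with hi' | hi'
    · rw [hleft i hi'.le, hleft (i + 1) hi']
      exact hstep i hi'
    · obtain ⟨j, rfl⟩ := Nat.exists_eq_add_of_le hi'
      rw [add_assoc, hright, hright]
      exact hstep' j (by omega)
  · calc recolorCount ρ (n + m) v = recolorCount σ n v + recolorCount τ m v := by
          rw [recolorCount_eq_sum, sum_range_add, recolorCount_eq_sum, recolorCount_eq_sum]
          congr 1
          · refine sum_congr rfl fun i hi => ?_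
            have hi := mem_range.mp hi
            rw [hleft i hi.le, hleft (i + 1) hi]
          · simp only [add_assoc, hright]
      _ ≤ b v + b' v := add_le_add (hcount v) (hcount' v)

theorem update [DecidableEq V] (hc : Proper G c) (v : V) (a : α)
    (hc' : Proper G (update c v a)) : Reconfigures G c (update c v a) (Pi.single v 1) := by
  by_cases ha : a = c v
  · rw [ha, update_eq_self]
    exact (refl hc).mono fun _ => Nat.zero_le _
  set σ : ℕ → V → α := fun i => if i = 0 then c else Function.update c v a
  refine ⟨1, σ, ⟨rfl, rfl, fun i _ => ?_, fun i hi => ?_⟩, fun u => ?_⟩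
  · by_cases hi : i = 0 <;> simp [σ, hi, hc, hc']
  · obtain rfl : i = 0 := by omega
    exact ⟨v, by simpa [σ] using Ne.symm ha, fun u hu => by simp [σ, hu]⟩
  · classical
    by_cases hu : u = v
    · subst hu
      rw [recolorCount_eq_sum, range_one, sum_singleton, Pi.single_eq_same]
      split_ifs <;> omega
    · simp [recolorCount_eq_sum, σ, hu]

theorem recolor_indepSet [DecidableEq V] (s : Finset V) (hs : G.IsIndepSet s) (a : α) :
    ∀ c : V → α, Proper G c → (∀ v ∈ s, ∀ w, G.Adj v w → c w ≠ a) →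
      Reconfigures G c (fun v => if v ∈ s then a else c v) (fun v => if v ∈ s then 1 else 0) := by
  induction s using Finset.induction_on with
  | empty =>
    intro c hc _
    simpa using (refl hc).mono fun _ => Nat.zero_le _
  | insert x s hx ih =>
    intro c hc ha
    have hc₁ : Proper G (Function.update c x a) := by
      intro u w huw
      rcases eq_or_ne u x with rfl | hu
      · rw [update_self, update_of_ne huw.ne.symm]
        exact (ha u (mem_insert_self u s) w huw).symm
      rcases eq_or_ne w x with rfl | hw
      · rw [update_self, update_of_ne hu]
        exact ha w (mem_insert_self w s) u huw.symm
      · rw [update_of_ne hu, update_of_ne hw]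
        exact hc huw
    have h := (update hc x a hc₁).trans
      (ih (hs.mono (by simp)) _ hc₁ fun v hv w hvw => ?_)
    · convert h.mono ?_ using 1
      · funext v
        by_cases hv : v = x <;> simp [hv]
      · intro v
        by_cases hv : v = x <;> simp [hv, hx]
    · have hwx : w ≠ x := by
        rintro rfl
        exact hs (by simp) (by simp [hv]) (ne_of_mem_of_not_mem hv hx).symm hvw.symm
      rw [update_of_ne hwx]
      exact ha v (mem_insert_of_mem hv) w hvw

end Reconfigures

section Coloring

variable {ι : Type*} {G : SimpleGraph V}

theorem proper_comp_coloring (γ : G.Coloring ι) {β : ι → α} (hβ : Injective β) :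
    Proper G (β ∘ γ) :=
  fun _ _ h => hβ.ne (γ.valid h)

theorem Reconfigures.recolorClass [Fintype V] [DecidableEq ι] (γ : G.Coloring ι) {c : V → α}
    (hc : Proper G c) (i : ι) (a : α) (ha : ∀ w, c w = a → γ w = i) :
    Reconfigures G c (fun v => if γ v = i then a else c v) (fun v => if γ v = i then 1 else 0) := by
  classical
  have hindep : G.IsIndepSet ↑({v | γ v = i} : Finset V) := fun u hu w hw _ huw =>
    γ.valid huw (by simp_all)
  simpa using recolor_indepSet _ hindep a c hc fun v hv w hvw hw =>
    γ.valid hvw (by simp_all)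

end Coloring

theorem Set.InjOn.update_insert {ι : Type*} [DecidableEq ι] {β : ι → α} {t : Set ι}
    (hβ : Set.InjOn β t) {i : ι} (hi : i ∉ t) {a : α} (ha : a ∉ β '' t) :
    Set.InjOn (update β i a) (insert i t) := by
  have heq : Set.EqOn β (update β i a) t := fun x hx =>
    (update_of_ne (ne_of_mem_of_not_mem hx hi) a β).symm
  rw [Set.injOn_insert hi, update_self, ← Set.image_congr heq]
  exact ⟨hβ.congr heq, ha⟩

theorem Function.Injective.update_of_notMem_range {ι : Type*} [DecidableEq ι] {β : ι → α}
    (hβ : Injective β) (i : ι) {a : α} (ha : a ∉ Set.range β) : Injective (update β i a) := by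
  have := (hβ.injOn (s := {i}ᶜ)).update_insert (i := i) (by simp)
    (a := a) fun ⟨x, _, hx⟩ => ha ⟨x, hx⟩
  rwa [Set.insert_eq, Set.union_compl_self, Set.injOn_univ] at this

section Alignment

variable {ι : Type*} [Fintype ι] [DecidableEq ι] [DecidableEq α]

structure AlignedOutside (γ : V → ι) (S : Finset ι) (c : V → α) (β : ι → α) : Prop where
  apply_eq : ∀ v, γ v ∉ S → c v = β (γ v)
  injOn : Set.InjOn β ↑Sᶜ
  notMem_image : ∀ v, γ v ∈ S → c v ∉ Sᶜ.image β

namespace AlignedOutside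

variable {γ : V → ι} {S : Finset ι} {c : V → α} {β : ι → α}

theorem mem_of_apply_eq (h : AlignedOutside γ S c β) {a : α} (ha : a ∉ Sᶜ.image β) {w : V}
    (hw : c w = a) : γ w ∈ S := by
  by_contra hwS
  exact ha (mem_image.mpr ⟨γ w, mem_compl.mpr hwS, (hw ▸ h.apply_eq w hwS).symm⟩)

theorem recolor (h : AlignedOutside γ S c β) {i : ι} (hi : i ∈ S) {a : α}
    (ha : a ∉ Sᶜ.image β) (hai : ∀ w, γ w ∈ S → c w = a → γ w = i) :
    AlignedOutside γ (S.erase i) (fun v => if γ v = i then a else c v) (update β i a) where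
  apply_eq v hv := by
    by_cases hvi : γ v = i
    · simp [hvi]
    · simp [hvi, h.apply_eq v fun hvS => hv (mem_erase.mpr ⟨hvi, hvS⟩)]
  injOn := by
    rw [compl_erase, coe_insert]
    exact h.injOn.update_insert (by simpa) (by rwa [← coe_image])
  notMem_image v hv := by
    obtain ⟨hvi, hvS⟩ := mem_erase.mp hv
    rw [if_neg hvi, compl_erase, mem_image]
    rintro ⟨j, hj, hjv⟩
    rcases mem_insert.mp hj with rfl | hj
    · exact hvi (hai v hvS (by simpa using hjv.symm))
    · rw [update_of_ne (ne_of_mem_of_not_mem hj (by simpa))] at hjv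
      exact h.notMem_image v hvS (mem_image.mpr ⟨j, hj, hjv⟩)

end AlignedOutside

variable [Fintype V] [Fintype α] {G : SimpleGraph V} {p : ℕ}

/-- The classes in `S` hold at most `p * #S` vertices, while at least `#S + |α| - |ι|` colors
are not used by the other classes; as `2 |α| > p |ι|`, one of them is used at most once. -/
theorem exists_rare_color (γ : G.Coloring ι) (hind : ∀ s : Set V, G.IsIndepSet s → s.ncard ≤ p)
    (hp : 2 ≤ p) (hcard : p * Fintype.card ι < 2 * Fintype.card α) (S : Finset ι) (c : V → α)
    (β : ι → α) : ∃ a ∉ Sᶜ.image β, #{v | γ v ∈ S ∧ c v = a} ≤ 1 := by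
  by_contra! h
  set T := (Sᶜ.image β)ᶜ
  have hclass : #{v | γ v ∈ S} ≤ p * #S := by
    refine card_le_mul_card_image_of_maps_to (fun v hv => (mem_filter.mp hv).2) p fun i _ => ?_
    have hindep : G.IsIndepSet ↑({v | γ v = i} : Finset V) := fun u hu w hw _ huw =>
      γ.valid huw (by simp_all)
    calc #{v ∈ ({v | γ v ∈ S} : Finset V) | γ v = i} ≤ #({v | γ v = i} : Finset V) :=
          card_le_card (filter_subset_filter _ (filter_subset _ _))
      _ ≤ p := (Set.ncard_coe_finset _).symm.trans_le (hind _ hindep)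
  have hrepeat : 2 * #T ≤ #{v | γ v ∈ S} := by
    calc 2 * #T ≤ ∑ a ∈ T, #{v ∈ ({v | γ v ∈ S} : Finset V) | c v = a} := by
          rw [mul_comm, ← smul_eq_mul, ← sum_const]
          refine sum_le_sum fun a ha => ?_
          have := h a (by simpa [T] using ha)
          rwa [filter_filter]
      _ ≤ #{v | γ v ∈ S} := by
          rw [sum_card_fiberwise_eq_card_filter]
          exact card_filter_le _ _
  have hfree : Fintype.card α ≤ #T + #Sᶜ := by
    have hT : #T = Fintype.card α - #(Sᶜ.image β) := card_compl _
    have := card_image_le (s := Sᶜ) (f := β)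
    have := card_le_univ (Sᶜ.image β)
    omega
  have hsplit : #S + #Sᶜ = Fintype.card ι := card_add_card_compl S
  nlinarith [Nat.mul_le_mul_right #Sᶜ hp]

theorem AlignedOutside.exists_reconfigures (γ : G.Coloring ι)
    (hind : ∀ s : Set V, G.IsIndepSet s → s.ncard ≤ p) (hp : 2 ≤ p)
    (hcard : p * Fintype.card ι < 2 * Fintype.card α) (S : Finset ι) :
    ∀ c β, Proper G c → AlignedOutside γ S c β →
      ∃ β' : ι → α, Injective β' ∧
        Reconfigures G c (β' ∘ γ) (fun v => if γ v ∈ S then 1 else 0) := by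
  induction S using Finset.strongInduction with
  | H S ih =>
  intro c β hc h
  rcases S.eq_empty_or_nonempty with rfl | ⟨i₀, hi₀⟩
  · refine ⟨β, by simpa using h.injOn, ?_⟩
    have hcβ : c = β ∘ γ := funext fun v => h.apply_eq v (notMem_empty _)
    simpa [← hcβ] using (Reconfigures.refl hc).mono fun _ => Nat.zero_le _
  obtain ⟨a, ha, hrare⟩ := exists_rare_color γ hind hp hcard S c β
  obtain ⟨i, hi, hai⟩ : ∃ i ∈ S, ∀ w, γ w ∈ S → c w = a → γ w = i := by
    by_cases hused : ∃ w, γ w ∈ S ∧ c w = a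
    · obtain ⟨w, hwS, hwa⟩ := hused
      refine ⟨γ w, hwS, fun w' hw'S hw'a => ?_⟩
      rw [card_le_one.mp hrare w' (by simp [hw'S, hw'a]) w (by simp [hwS, hwa])]
    · push Not at hused
      exact ⟨i₀, hi₀, fun w hwS hwa => absurd hwa (hused w hwS)⟩
  have hmove := Reconfigures.recolorClass γ hc i a fun w hwa =>
    hai w (h.mem_of_apply_eq ha hwa) hwa
  obtain ⟨β', hβ', hrest⟩ := ih (S.erase i) (erase_ssubset hi) _ _ hmove.proper_right
    (h.recolor hi ha hai)
  refine ⟨β', hβ', (hmove.trans hrest).mono fun v => ?_⟩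
  by_cases hvi : γ v = i <;> simp [hvi, hi]

theorem exists_reconfigures_comp_coloring (γ : G.Coloring ι)
    (hind : ∀ s : Set V, G.IsIndepSet s → s.ncard ≤ p) (hp : 2 ≤ p)
    (hcard : p * Fintype.card ι < 2 * Fintype.card α) {c : V → α} (hc : Proper G c) :
    ∃ β : ι → α, Injective β ∧ Reconfigures G c (β ∘ γ) 1 := by
  have : Nonempty α := Fintype.card_pos_iff.mp (by omega)
  have hstart : AlignedOutside γ univ c fun _ => Classical.arbitrary α :=
    ⟨fun v hv => absurd (mem_univ _) hv, by simp, by simp⟩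
  obtain ⟨β, hβ, h⟩ := AlignedOutside.exists_reconfigures γ hind hp hcard univ c _ hc hstart
  exact ⟨β, hβ, h.mono fun v => by simp⟩

end Alignment

section Renaming

variable {ι : Type*}

open Classical in
/-- How many more times the class `i` has to move on the way from `β` to `β'`: twice if its
current color is another class's target, since it may have to be parked first. -/
noncomputable def renameCost (β β' : ι → α) (i : ι) : ℕ :=
  if β i = β' i then 0 else if β i ∈ Set.range β' then 2 else 1

theorem renameCost_le_two (β β' : ι → α) (i : ι) : renameCost β β' i ≤ 2 := by
  unfold renameCost
  split_ifs <;> omega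

theorem renameCost_update_of_ne [DecidableEq ι] (β β' : ι → α) {i j : ι} (hji : j ≠ i)
    (a : α) : renameCost (update β i a) β' j = renameCost β β' j := by
  rw [renameCost, renameCost, update_of_ne hji]

theorem exists_renameCost_update_lt [Fintype ι] [Fintype α] [DecidableEq ι]
    (hcard : Fintype.card ι < Fintype.card α) {β β' : ι → α} (hβ' : Injective β')
    (hne : β ≠ β') :
    ∃ i, ∃ a ∉ Set.range β, renameCost (update β i a) β' i < renameCost β β' i := by
  by_cases hfree : ∃ i, β i ≠ β' i ∧ β' i ∉ Set.range β
  · obtain ⟨i, hi, hfree⟩ := hfree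
    refine ⟨i, β' i, hfree, ?_⟩
    simp only [renameCost, update_self, if_pos, if_neg hi]
    split_ifs <;> omega
  push Not at hfree
  obtain ⟨i₀, hi₀⟩ := ne_iff.mp hne
  obtain ⟨j, hj⟩ := hfree i₀ hi₀
  obtain ⟨f, hf⟩ : ∃ f, f ∉ Set.range β := by
    by_contra! hsurj
    exact (Fintype.card_le_of_surjective β fun f => hsurj f).not_gt hcard
  -- Every target color is occupied, so the free color `f` is nobody's target.
  have hf' : f ∉ Set.range β' := by
    rintro ⟨m, rfl⟩
    by_cases hm : β m = β' m
    · exact hf ⟨m, hm⟩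
    · exact hf (hfree m hm)
  have hj' : β j ≠ β' j := fun h => hi₀ (by rw [hβ' (hj.symm.trans h)]; exact h)
  refine ⟨j, f, hf, ?_⟩
  simp [renameCost, hj', hf', show β j ∈ Set.range β' from ⟨i₀, hj.symm⟩,
    show f ≠ β' j from fun h => hf' ⟨j, h.symm⟩]

variable [Fintype V] [DecidableEq ι] {G : SimpleGraph V}

theorem Reconfigures.comp_update (γ : G.Coloring ι) {β : ι → α} (hβ : Injective β) (i : ι)
    {a : α} (ha : a ∉ Set.range β) :
    Reconfigures G (β ∘ γ) (Function.update β i a ∘ γ) (fun v => if γ v = i then 1 else 0) := by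
  have := recolorClass γ (proper_comp_coloring γ hβ) i a fun w hw => absurd ⟨γ w, hw⟩ ha
  convert this using 2 with v
  simp [update_apply]

theorem reconfigures_comp_of_injective [Fintype ι] [Fintype α] (γ : G.Coloring ι)
    (hcard : Fintype.card ι < Fintype.card α) {β' : ι → α} (hβ' : Injective β') (β : ι → α)
    (hβ : Injective β) :
    Reconfigures G (β ∘ γ) (β' ∘ γ) (fun v => renameCost β β' (γ v)) := by
  induction h : ∑ i, renameCost β β' i using Nat.strong_induction_on generalizing β with
  | _ n ih =>
  by_cases hne : β = β'
  · subst hne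
    exact (Reconfigures.refl (proper_comp_coloring γ hβ)).mono fun _ => Nat.zero_le _
  obtain ⟨i, a, ha, hlt⟩ := exists_renameCost_update_lt hcard hβ' hne
  have hle : ∀ j, renameCost (update β i a) β' j ≤ renameCost β β' j := fun j => by
    rcases eq_or_ne j i with rfl | hji
    · exact hlt.le
    · rw [renameCost_update_of_ne _ _ hji]
  have hrest := ih _ (h ▸ sum_lt_sum (fun j _ => hle j) ⟨i, mem_univ _, hlt⟩) (update β i a)
    (hβ.update_of_notMem_range i ha) rfl
  refine ((Reconfigures.comp_update γ hβ i ha).trans hrest).mono fun v => ?_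
  rcases eq_or_ne (γ v) i with hvi | hvi
  · simp only [Pi.add_apply, hvi, if_true]
    omega
  · simp [hvi, renameCost_update_of_ne _ _ hvi]

end Renaming

theorem bounded_indep_recoloring_general {V : Type} [Fintype V] (G : SimpleGraph V)
    (p k k' : ℕ) (hp : 2 ≤ p)
    (hcol : G.Colorable k)
    (hind : ∀ s : Set V, s.Pairwise (fun a b => ¬ G.Adj a b) → s.ncard ≤ p)
    (hk' : p * k / 2 + 1 ≤ k') :
    ∀ c₁ c₂ : V → Fin k', Proper G c₁ → Proper G c₂ →
      ∃ (n : ℕ) (σ : ℕ → V → Fin k'), n ≤ 4 * Fintype.card V ∧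
        RecolorSeqP G c₁ c₂ n σ ∧ ∀ v, recolorCount σ n v ≤ 4 := by
  intro c₁ c₂ hc₁ hc₂
  obtain ⟨γ⟩ := hcol
  have hcard : p * Fintype.card (Fin k) < 2 * Fintype.card (Fin k') := by
    simp only [Fintype.card_fin]
    omega
  have hkk' : Fintype.card (Fin k) < Fintype.card (Fin k') := by nlinarith
  obtain ⟨β₁, hβ₁, h₁⟩ := exists_reconfigures_comp_coloring γ hind hp hcard hc₁
  obtain ⟨β₂, hβ₂, h₂⟩ := exists_reconfigures_comp_coloring γ hind hp hcard hc₂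
  obtain ⟨n, σ, hσ, hcount⟩ :=
    ((h₁.trans (reconfigures_comp_of_injective γ hkk' hβ₂ β₁ hβ₁)).trans h₂.symm).mono
      (b' := fun _ => 4) fun v => by
        have := renameCost_le_two β₁ β₂ (γ v)
        simp only [Pi.add_apply, Pi.one_apply]
        omega
  refine ⟨n, σ, ?_, hσ, hcount⟩
  calc n ≤ ∑ v, recolorCount σ n v := hσ.le_sum_recolorCount
    _ ≤ ∑ _v : V, 4 := sum_le_sum fun v _ => hcount v
    _ = 4 * Fintype.card V := by simp [mul_comm]

/-- if `G` is `k`-colorable with independence number at most `p`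
(`p, k ≥ 2`) and `k' ≥ ⌊pk/2⌋ + 1`, then any two proper `k'`-colorings are joined by a
sequence of single-vertex recolorings (through proper `k'`-colorings) recoloring each
vertex at most 4 times; in particular of length at most `4·|V(G)|`. -/
theorem bounded_indep_recoloring {V : Type} [Fintype V] (G : SimpleGraph V)
    (p k k' : ℕ) (hp : 2 ≤ p) (hk : 2 ≤ k)
    (hcol : G.Colorable k)
    (hind : ∀ s : Set V, s.Pairwise (fun a b => ¬ G.Adj a b) → s.ncard ≤ p)
    (hk' : p * k / 2 + 1 ≤ k') :
    ∀ c₁ c₂ : V → Fin k', Proper G c₁ → Proper G c₂ →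
      ∃ (n : ℕ) (σ : ℕ → V → Fin k'), n ≤ 4 * Fintype.card V ∧
        RecolorSeqP G c₁ c₂ n σ ∧ ∀ v, recolorCount σ n v ≤ 4 :=
  bounded_indep_recoloring_general G p k k' hp hcol hind hk'
end

section
/- For every p ≥ 2 and every k ≥ 2, there exists a k-colorable graph G with independence number at most p such that G admits a frozen ⌊pk/2⌋-coloring, and hence the recoloring graph 𝒢(G, ⌊pk/2⌋) is disconnected whenever it has more than one vertex. -/
/-- A frozen `t`-coloring: a proper coloring such that every vertex sees all `t`
colors in its closed neighborhood. -/
def Frozen {V : Type} (G : SimpleGraph V) {t : ℕ} (c : V → Fin t) : Prop :=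
  Proper G c ∧ ∀ v, ∀ i : Fin t, ∃ u, (u = v ∨ G.Adj v u) ∧ c u = i

/-- The `t`-recoloring graph: vertices are the proper `t`-colorings of `G`, two
colorings being adjacent iff they differ at exactly one vertex. -/
def RecolorGraph {V : Type} (G : SimpleGraph V) (t : ℕ) :
    SimpleGraph {c : V → Fin t // Proper G c} where
  Adj c₁ c₂ := ∃ v, c₁.1 v ≠ c₂.1 v ∧ ∀ u, u ≠ v → c₁.1 u = c₂.1 u
  symm := by
    constructor
    rintro c₁ c₂ ⟨v, hv, h⟩
    exact ⟨v, hv.symm, fun u hu => (h u hu).symm⟩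
  loopless := by
    constructor
    rintro c ⟨v, hv, -⟩
    exact hv rfl

/-! Take `t = ⌊pk/2⌋` and the vertices `0, …, 2t - 1`, with `n ~ m` iff `n` and `m` lie in
different blocks `⌊n/p⌋ ≠ ⌊m/p⌋` and have different residues `n % t ≠ m % t`. The blocks give a
`k`-coloring and the residues a `t`-coloring. Each residue class `{i, i + t}` meets two different
blocks because `p ≤ t`, so every vertex sees every residue: the residue coloring is frozen. An
independent set lies in one block (at most `p` vertices) or, as soon as it meets two blocks, in a
single residue class (at most `2 ≤ p` vertices). A frozen coloring is an isolated vertex of the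
recoloring graph. -/

namespace SimpleGraph

variable {V A B : Type*}

/-- For `f = (· / p)` and `g = (· % t)` on `Fin (2 * t)`, with `k` even and `t = pk/2`, this is
the join of `k/2` copies of `K_{p,p}` minus a perfect matching. -/
def crossGraph (f : V → A) (g : V → B) : SimpleGraph V :=
  (⊤ : SimpleGraph A).comap f ⊓ (⊤ : SimpleGraph B).comap g

@[simp]
theorem crossGraph_adj {f : V → A} {g : V → B} {u v : V} :
    (crossGraph f g).Adj u v ↔ f u ≠ f v ∧ g u ≠ g v := by
  simp [crossGraph]

theorem colorable_crossGraph {k : ℕ} (f : V → Fin k) (g : V → B) :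
    (crossGraph f g).Colorable k :=
  ⟨Coloring.mk f fun h => (crossGraph_adj.1 h).1⟩

theorem frozen_crossGraph {V : Type} {t : ℕ} (f : V → A) (g : V → Fin t)
    (hg : ∀ i, ∃ u w, g u = i ∧ g w = i ∧ f u ≠ f w) : Frozen (crossGraph f g) g := by
  refine ⟨fun u v h => (crossGraph_adj.1 h).2, fun v i => ?_⟩
  by_cases hvi : g v = i
  · exact ⟨v, Or.inl rfl, hvi⟩
  obtain ⟨u, w, hu, hw, huw⟩ := hg i
  by_cases hvu : f v = f u
  · exact ⟨w, Or.inr (crossGraph_adj.2 ⟨hvu ▸ huw, hw ▸ hvi⟩), hw⟩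
  · exact ⟨u, Or.inr (crossGraph_adj.2 ⟨hvu, hu ▸ hvi⟩), hu⟩

theorem ncard_le_of_isIndepSet_crossGraph [Finite V] {f : V → A} {g : V → B} {p : ℕ}
    (hf : ∀ a, (f ⁻¹' {a}).ncard ≤ p) (hg : ∀ b, (g ⁻¹' {b}).ncard ≤ p) {s : Set V}
    (hs : (crossGraph f g).IsIndepSet s) : s.ncard ≤ p := by
  by_cases hblock : ∃ a ∈ s, ∃ b ∈ s, f a ≠ f b
  · obtain ⟨a, ha, b, hb, hab⟩ := hblock
    have hsame : ∀ u ∈ s, ∀ v ∈ s, f u ≠ f v → g u = g v := fun u hu v hv huv =>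
      by_contra fun hg => hs hu hv (fun h => huv (h ▸ rfl)) (crossGraph_adj.2 ⟨huv, hg⟩)
    have hab' := hsame a ha b hb hab
    refine (Set.ncard_le_ncard (fun w hw => ?_) (Set.toFinite _)).trans (hg (g a))
    by_cases hwa : f w = f a
    · exact (hsame w hw b hb fun h => hab (hwa.symm.trans h)).trans hab'.symm
    · exact hsame w hw a ha hwa
  · push Not at hblock
    obtain rfl | ⟨a, ha⟩ := s.eq_empty_or_nonempty
    · simp
    exact (Set.ncard_le_ncard (fun w hw => hblock w hw a ha) (Set.toFinite _)).trans (hf (f a))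

end SimpleGraph

open SimpleGraph

theorem Frozen.isIsolated {V : Type} {G : SimpleGraph V} {t : ℕ} {c : V → Fin t}
    (hc : Frozen G c) : (RecolorGraph G t).IsIsolated ⟨c, hc.1⟩ := by
  rintro d ⟨v, hv, hrest⟩
  obtain ⟨u, rfl | hvu, hu⟩ := hc.2 v (d.1 v)
  · exact hv hu
  · exact d.2 hvu (hu.symm.trans (hrest u hvu.ne.symm))

theorem Frozen.not_connected_recolorGraph {V : Type} {G : SimpleGraph V} {t : ℕ} {c : V → Fin t}
    (hc : Frozen G c) (h : ∃ c₁ c₂ : {c : V → Fin t // Proper G c}, c₁ ≠ c₂) :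
    ¬ (RecolorGraph G t).Connected := by
  obtain ⟨c₁, c₂, hne⟩ := h
  have := nontrivial_of_ne c₁ c₂ hne
  exact fun hcon => hcon.preconnected.not_isIsolated _ hc.isIsolated

namespace Fin

theorem ncard_setOf_div_eq_le {N m : ℕ} (hm : 0 < m) (j : ℕ) :
    {n : Fin N | (n : ℕ) / m = j}.ncard ≤ m := by
  refine (Set.ncard_le_ncard_of_injOn (t := Set.Iio _) (fun n : Fin N => (n : ℕ) % m)
    (fun n _ => Nat.mod_lt _ hm) (fun a ha b hb hab => ?_) (Set.finite_Iio m)).trans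
    (Set.ncard_Iio_nat m).le
  replace hab : (a : ℕ) % m = b % m := hab
  exact Fin.ext (by rw [← Nat.div_add_mod a m, ← Nat.div_add_mod b m, ha.out, hb.out, hab])

theorem ncard_setOf_mod_eq_le {N m q : ℕ} (hN : N ≤ m * q) (i : ℕ) :
    {n : Fin N | (n : ℕ) % m = i}.ncard ≤ q := by
  refine (Set.ncard_le_ncard_of_injOn (t := Set.Iio _) (fun n : Fin N => (n : ℕ) / m)
    (fun n _ => Nat.div_lt_of_lt_mul (n.2.trans_le hN)) (fun a ha b hb hab => ?_)
    (Set.finite_Iio q)).trans (Set.ncard_Iio_nat q).le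
  replace hab : (a : ℕ) / m = b / m := hab
  exact Fin.ext (by rw [← Nat.div_add_mod a m, ← Nat.div_add_mod b m, ha.out, hb.out, hab])

end Fin

/-- for every `p ≥ 2` and `k ≥ 2` there is a `k`-colorable graph with
independence number at most `p` admitting a frozen `⌊pk/2⌋`-coloring; hence its
`⌊pk/2⌋`-recoloring graph is disconnected whenever it has more than one vertex. -/
theorem exists_frozen_graph (p k : ℕ) (hp : 2 ≤ p) (hk : 2 ≤ k) :
    ∃ (N : ℕ) (G : SimpleGraph (Fin N)),
      G.Colorable k ∧
      (∀ s : Set (Fin N), s.Pairwise (fun a b => ¬ G.Adj a b) → s.ncard ≤ p) ∧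
      (∃ c : Fin N → Fin (p * k / 2), Frozen G c) ∧
      ((∃ c₁ c₂ : {c : Fin N → Fin (p * k / 2) // Proper G c}, c₁ ≠ c₂) →
        ¬ (RecolorGraph G (p * k / 2)).Connected) := by
  set t := p * k / 2
  have hpt : p ≤ t := by
    simpa using Nat.div_le_div_right (c := 2) (Nat.mul_le_mul_left p hk)
  have htk : 2 * t ≤ p * k := by omega
  let block : Fin (2 * t) → Fin k := fun n =>
    ⟨n / p, Nat.div_lt_of_lt_mul (n.2.trans_le htk)⟩
  let residue : Fin (2 * t) → Fin t := fun n => ⟨n % t, Nat.mod_lt _ (by omega)⟩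
  have hblocks (i : ℕ) : i / p < (i + t) / p :=
    calc i / p < i / p + 1 := Nat.lt_succ_self _
      _ = (i + p) / p := (Nat.add_div_right _ (by omega)).symm
      _ ≤ (i + t) / p := Nat.div_le_div_right (by omega)
  have hfrozen : Frozen (crossGraph block residue) residue := by
    refine frozen_crossGraph block residue fun i =>
      ⟨⟨i, by omega⟩, ⟨i + t, by omega⟩, ?_, ?_, fun h => (hblocks i).ne (Fin.val_eq_of_eq h)⟩
    · exact Fin.ext (Nat.mod_eq_of_lt i.2)
    · exact Fin.ext (by simp [residue, Nat.mod_eq_of_lt i.2])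
  refine ⟨2 * t, crossGraph block residue, colorable_crossGraph block residue,
    fun s hs => ncard_le_of_isIndepSet_crossGraph (fun j => ?_) (fun i => ?_) hs,
    ⟨residue, hfrozen⟩, hfrozen.not_connected_recolorGraph⟩
  · exact (congrArg Set.ncard (Set.ext fun _ => Fin.ext_iff)).trans_le
      (Fin.ncard_setOf_div_eq_le (by omega) j)
  · exact (congrArg Set.ncard (Set.ext fun _ => Fin.ext_iff)).trans_le
      ((Fin.ncard_setOf_mod_eq_le (q := 2) (by omega) i).trans hp)
end
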